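/- Let Σ be a compact oriented surface, φ ∈ Homeo(Σ) a homeomorphism preserving a Borel probability measure μ, and k ≥ 1 an integer. If the asymptotic cycle C(φ, μ) lies in H_1(M_φ; ℚ), then C(φ^k, μ) lies in H_1(M_{φ^k}; ℚ). -/

import Mathlib

open MeasureTheory Set Function Filter

noncomputable section

/-- The circle `𝕋 = ℝ/ℤ`. -/
abbrev Circ : Type := AddCircle (1 : ℝ)

/-- The mapping-torus identification on `ℝ × X`: `(t, x) ∼ (t − n, eⁿ x)` for `n : ℤ`
(so in particular `(1, x) ∼ (0, e x)`), where `e` is the underlying bijection of the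
homeomorphism. -/
def mtRel {X : Type*} (e : Equiv.Perm X) (p q : ℝ × X) : Prop :=
  ∃ n : ℤ, q.1 = p.1 - n ∧ q.2 = (e ^ n) p.2

/-- The mapping torus `M_φ`: the quotient of `ℝ × X` by `(1, x) ∼ (0, e x)`, with the
quotient topology. -/
def MappingTorus {X : Type*} [TopologicalSpace X] (e : Equiv.Perm X) : Type _ :=
  Quot (mtRel e)

instance {X : Type*} [TopologicalSpace X] (e : Equiv.Perm X) :
    TopologicalSpace (MappingTorus e) :=
  inferInstanceAs (TopologicalSpace (Quot (mtRel e)))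

instance {X : Type*} [TopologicalSpace X] (e : Equiv.Perm X) :
    MeasurableSpace (MappingTorus e) := borel _

instance {X : Type*} [TopologicalSpace X] (e : Equiv.Perm X) :
    BorelSpace (MappingTorus e) := ⟨rfl⟩

/-- The canonical projection `ℝ × X → M_φ`. -/
def mtMk {X : Type*} [TopologicalSpace X] (e : Equiv.Perm X) : ℝ × X → MappingTorus e :=
  Quot.mk (mtRel e)

/-- The suspension flow `ψ^s [(t, x)] = [(t + s, x)]` on the mapping torus. -/
def suspFlow {X : Type*} [TopologicalSpace X] (e : Equiv.Perm X) (s : ℝ) :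
    MappingTorus e → MappingTorus e :=
  Quot.map (fun p => (p.1 + s, p.2)) (by
    rintro ⟨t, x⟩ ⟨t', y⟩ ⟨n, h1, h2⟩
    exact ⟨n, by simp only at h1 h2 ⊢; rw [h1]; ring, h2⟩)

/-- The measure `dt ⊗ μ` on the mapping torus: the pushforward of the product of
Lebesgue measure on `[0,1)` with `μ` under the canonical projection. -/
def mtMeasure {X : Type*} [TopologicalSpace X] (e : Equiv.Perm X) [MeasurableSpace X]
    (μ : Measure X) : Measure (MappingTorus e) :=
  Measure.map (mtMk e) ((volume.restrict (Ico (0 : ℝ) 1)).prod μ)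

/-- `AsympPair e μ f r` says that the pairing `⟨C(φ, μ), [f]⟩` of Schwartzman's
asymptotic cycle `C(φ, μ) ∈ H₁(M_φ; ℝ) ≅ Hom([M_φ, ℝ/ℤ], ℝ)` with the class of
`f : M_φ → ℝ/ℤ` equals `r`: there is a continuous family `G (s, ·)` of real-valued
lifts of `f ∘ ψ^s − f` with `G (0, ·) = 0` such that `(∫ G (s, ·) d(dt ⊗ μ)) / s → r`
as `s → ∞` (by Kingman's subadditive ergodic theorem this limit is the integral of
`G = lim g_s / s` against `dt ⊗ μ`). -/
def AsympPair {X : Type*} [TopologicalSpace X] (e : Equiv.Perm X) [MeasurableSpace X]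
    (μ : Measure X) (f : C(MappingTorus e, Circ)) (r : ℝ) : Prop :=
  ∃ G : ℝ × MappingTorus e → ℝ, Continuous G ∧ (∀ m, G (0, m) = 0) ∧
    (∀ s m, ((G (s, m) : ℝ) : Circ) = f (suspFlow e s m) - f m) ∧
    Tendsto (fun s : ℝ => (∫ m, G (s, m) ∂(mtMeasure e μ)) / s) atTop (nhds r)


section Aux

variable {X : Type*} [TopologicalSpace X]

lemma mtRel_equivalence (e : Equiv.Perm X) : Equivalence (mtRel e) := by
  refine ⟨fun p => ⟨0, by simp, by simp⟩, ?_, ?_⟩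
  · rintro p q ⟨n, h1, h2⟩
    refine ⟨-n, by rw [h1]; push_cast; ring, ?_⟩
    rw [h2, ← Equiv.Perm.mul_apply, ← zpow_add]
    simp
  · rintro p q s ⟨n, h1, h2⟩ ⟨m, h3, h4⟩
    refine ⟨n + m, by rw [h3, h1]; push_cast; ring, ?_⟩
    rw [h4, h2, ← Equiv.Perm.mul_apply, ← zpow_add, add_comm m n]

lemma mtMk_eq_iff (e : Equiv.Perm X) {p q : ℝ × X} :
    mtMk e p = mtMk e q ↔ mtRel e p q := by
  show Quot.mk (mtRel e) p = Quot.mk (mtRel e) q ↔ mtRel e p q; rw [Quot.eq]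
  exact (mtRel_equivalence e).eqvGen_iff

lemma mtMk_one (e : Equiv.Perm X) (t : ℝ) (x : X) :
    mtMk e (t, x) = mtMk e (t - 1, e x) :=
  Quot.sound ⟨1, by norm_num, by simp⟩

end Aux

set_option linter.unusedSectionVars false

section Aux2

variable {X : Type*} [TopologicalSpace X]

/-- Powers of a homeomorphism as homeomorphisms. -/
def homeoPow (φ : X ≃ₜ X) : ℕ → X ≃ₜ X
  | 0 => Homeomorph.refl X
  | (n + 1) => φ.trans (homeoPow φ n)

lemma homeoPow_coe (φ : X ≃ₜ X) (n : ℕ) : ⇑(homeoPow φ n) = ⇑(φ.toEquiv ^ n) := by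
  induction n with
  | zero => rfl
  | succ m ih =>
      funext x
      show homeoPow φ m (φ x) = (φ.toEquiv ^ (m + 1)) x
      rw [pow_succ, Equiv.Perm.mul_apply, ih]
      rfl

lemma homeoPow_toEquiv (φ : X ≃ₜ X) (n : ℕ) : (homeoPow φ n).toEquiv = φ.toEquiv ^ n :=
  Equiv.ext fun x => congrFun (homeoPow_coe φ n) x

lemma contPow (φ : X ≃ₜ X) (n : ℕ) : Continuous fun x => (φ.toEquiv ^ n) x := by
  rw [show (fun x => (φ.toEquiv ^ n) x) = ⇑(homeoPow φ n) from (homeoPow_coe φ n).symm]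
  exact (homeoPow φ n).continuous

lemma contZpow (φ : X ≃ₜ X) (n : ℤ) : Continuous fun x => (φ.toEquiv ^ n) x := by
  cases n with
  | ofNat m =>
      simpa [zpow_natCast] using contPow φ m
  | negSucc m =>
      have h : φ.toEquiv ^ (Int.negSucc m) = ((homeoPow φ (m + 1)).toEquiv)⁻¹ := by
        rw [homeoPow_toEquiv, zpow_negSucc]
      rw [h]
      show Continuous ⇑((homeoPow φ (m + 1)).toEquiv.symm)
      exact (homeoPow φ (m + 1)).symm.continuous

lemma mpPow [MeasurableSpace X] (φ : X ≃ₜ X) {μ : MeasureTheory.Measure X}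
    (hφ : MeasureTheory.MeasurePreserving ⇑φ μ μ) (n : ℕ) :
    MeasureTheory.MeasurePreserving ⇑(φ.toEquiv ^ n) μ μ := by
  induction n with
  | zero => simpa using MeasureTheory.MeasurePreserving.id μ
  | succ m ih =>
      have h : ⇑(φ.toEquiv ^ (m + 1)) = ⇑(φ.toEquiv ^ m) ∘ ⇑φ := by
        funext x; simp [pow_succ, Equiv.Perm.mul_apply]
      rw [h]
      exact ih.comp hφ

lemma mtMk_isOpenMap (φ : X ≃ₜ X) : IsOpenMap (mtMk φ.toEquiv) := by
  intro U hU
  have key : mtMk φ.toEquiv ⁻¹' (mtMk φ.toEquiv '' U) =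
      ⋃ n : ℤ, (fun p : ℝ × X => (p.1 + (n : ℝ), (φ.toEquiv ^ (-n)) p.2)) ⁻¹' U := by
    ext p
    simp only [Set.mem_preimage, Set.mem_image, Set.mem_iUnion]
    constructor
    · rintro ⟨u, hu, huv⟩
      obtain ⟨n, h1, h2⟩ := (mtMk_eq_iff φ.toEquiv).mp huv
      refine ⟨n, ?_⟩
      have hu1 : p.1 + (n : ℝ) = u.1 := by rw [h1]; ring
      have hu2 : (φ.toEquiv ^ (-n)) p.2 = u.2 := by
        rw [h2, ← Equiv.Perm.mul_apply, ← zpow_add]; simp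
      show (p.1 + (n : ℝ), (φ.toEquiv ^ (-n)) p.2) ∈ U
      rw [show (p.1 + (n : ℝ), (φ.toEquiv ^ (-n)) p.2) = u from Prod.ext hu1 hu2]
      exact hu
    · rintro ⟨n, hn⟩
      refine ⟨(p.1 + (n : ℝ), (φ.toEquiv ^ (-n)) p.2), hn, (mtMk_eq_iff φ.toEquiv).mpr ?_⟩
      refine ⟨n, by simp, ?_⟩
      show p.2 = (φ.toEquiv ^ n) ((φ.toEquiv ^ (-n)) p.2)
      rw [← Equiv.Perm.mul_apply, ← zpow_add]; simp
  have hopen : IsOpen (mtMk φ.toEquiv ⁻¹' (mtMk φ.toEquiv '' U)) := by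
    rw [key]
    exact isOpen_iUnion fun n =>
      (((continuous_fst.add continuous_const).prodMk
        ((contZpow φ (-n)).comp continuous_snd)).isOpen_preimage U hU)
  exact (isQuotientMap_quot_mk.isOpen_preimage).mp hopen

lemma mt_compactSpace [CompactSpace X] (e : Equiv.Perm X) : CompactSpace (MappingTorus e) := by
  constructor
  have himg : (Set.univ : Set (MappingTorus e)) =
      mtMk e '' (Set.Icc (0 : ℝ) 1 ×ˢ Set.univ) := by
    refine (Set.eq_univ_of_forall ?_).symm
    intro m
    refine Quot.ind (fun p => ?_) m
    obtain ⟨t, x⟩ := p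
    refine ⟨(t - (⌊t⌋ : ℝ), (e ^ ⌊t⌋) x), ⟨⟨?_, ?_⟩, trivial⟩, ?_⟩
    · show (0:ℝ) ≤ t - (⌊t⌋:ℝ)
      have := Int.floor_le t; linarith
    · show t - (⌊t⌋:ℝ) ≤ 1
      have := Int.lt_floor_add_one t; linarith
    · exact (Quot.sound ⟨⌊t⌋, rfl, rfl⟩).symm
  rw [himg]
  exact (isCompact_Icc.prod isCompact_univ).image continuous_quot_mk

end Aux2

section Aux3

lemma sum_shift {α : Type*} [AddCommGroup α] (h : ℤ → α) (k : ℕ)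
    (hp : ∀ m : ℤ, h (m + k) = h m) (n : ℤ) :
    ∑ j ∈ Finset.range k, h (j + n) = ∑ j ∈ Finset.range k, h j := by
  have step : ∀ n : ℤ, ∑ j ∈ Finset.range k, h (j + (n + 1)) =
      ∑ j ∈ Finset.range k, h (j + n) := by
    intro n
    have h1 := Finset.sum_range_succ (fun j : ℕ => h (j + n)) k
    have h2 := Finset.sum_range_succ' (fun j : ℕ => h (j + n)) k
    have key : ∑ j ∈ Finset.range k, h ((j : ℤ) + (n + 1)) =
        ∑ j ∈ Finset.range k, h (((j + 1 : ℕ) : ℤ) + n) :=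
      Finset.sum_congr rfl fun j _ => by congr 1; push_cast; ring
    have h3 : ∑ j ∈ Finset.range k, h (((j + 1 : ℕ) : ℤ) + n) =
        ∑ j ∈ Finset.range (k + 1), h ((j : ℤ) + n) - h (((0 : ℕ) : ℤ) + n) :=
      eq_sub_of_add_eq h2.symm
    rw [key, h3, h1]
    have hk' : h ((k : ℤ) + n) = h n := by rw [add_comm]; exact hp n
    simp [hk']
  induction n using Int.induction_on with
  | zero => simp
  | succ m ih => exact (step m).trans ih
  | pred m ih =>
      have hs := step (-(m : ℤ) - 1)
      rw [show (-(m : ℤ) - 1 + 1) = -(m : ℤ) by ring] at hs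
      exact hs.symm.trans ih

end Aux3

section Aux4

lemma circ_coe_sum {ι : Type*} (s : Finset ι) (a : ι → ℝ) :
    ((∑ j ∈ s, a j : ℝ) : Circ) = ∑ j ∈ s, ((a j : ℝ) : Circ) :=
  map_sum (QuotientAddGroup.mk' (AddSubgroup.zmultiples (1 : ℝ))) a s

lemma descent_sum {α : Type*} [AddCommGroup α] {X : Type*} [TopologicalSpace X]
    (e : Equiv.Perm X) (k : ℕ) (hk : (k : ℝ) ≠ 0) (g : MappingTorus (e ^ k) → α) :
    ∀ p q : ℝ × X, mtRel e p q →
      (∑ j ∈ Finset.range k, g (mtMk (e ^ k) ((p.1 - j) / k, (e ^ (j : ℤ)) p.2))) =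
      ∑ j ∈ Finset.range k, g (mtMk (e ^ k) ((q.1 - j) / k, (e ^ (j : ℤ)) q.2)) := by
  rintro p q ⟨n, h1, h2⟩
  set h : ℤ → α := fun m => g (mtMk (e ^ k) ((p.1 - (m : ℝ)) / k, (e ^ m) p.2)) with hh
  have hper : ∀ m : ℤ, h (m + (k : ℤ)) = h m := by
    intro m
    have cp : ((p.1 - ((m + (k : ℤ) : ℤ) : ℝ)) / k, (e ^ (m + (k : ℤ))) p.2)
        = ((p.1 - (m : ℝ)) / k - 1, (e ^ k) ((e ^ m) p.2)) := by
      refine Prod.ext ?_ ?_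
      · show (p.1 - ((m + (k : ℤ) : ℤ) : ℝ)) / k = (p.1 - (m : ℝ)) / k - 1
        rw [div_sub_one hk]
        push_cast
        ring
      · show (e ^ (m + (k : ℤ))) p.2 = (e ^ k) ((e ^ m) p.2)
        rw [add_comm, zpow_add, Equiv.Perm.mul_apply, zpow_natCast]
    calc h (m + (k : ℤ))
        = g (mtMk (e ^ k) ((p.1 - (m : ℝ)) / k - 1, (e ^ k) ((e ^ m) p.2))) :=
          congrArg (fun z => g (mtMk (e ^ k) z)) cp
      _ = h m := (congrArg g (mtMk_one (e ^ k) ((p.1 - (m : ℝ)) / k) ((e ^ m) p.2))).symm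
  calc (∑ j ∈ Finset.range k, g (mtMk (e ^ k) ((p.1 - j) / k, (e ^ (j : ℤ)) p.2)))
      = ∑ j ∈ Finset.range k, h (j : ℤ) := Finset.sum_congr rfl (fun j _ => by
        show g _ = g _; norm_cast)
    _ = ∑ j ∈ Finset.range k, h ((j : ℤ) + n) := (sum_shift h k hper n).symm
    _ = ∑ j ∈ Finset.range k, g (mtMk (e ^ k) ((q.1 - j) / k, (e ^ (j : ℤ)) q.2)) := by
        refine Finset.sum_congr rfl (fun j _ => ?_)
        have cp : ((q.1 - (j : ℝ)) / k, (e ^ (j : ℤ)) q.2)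
            = ((p.1 - (((j : ℤ) + n : ℤ) : ℝ)) / k, (e ^ ((j : ℤ) + n)) p.2) := by
          refine Prod.ext ?_ ?_
          · show (q.1 - (j : ℝ)) / k = (p.1 - (((j : ℤ) + n : ℤ) : ℝ)) / k
            rw [h1]; push_cast; ring_nf
          · show (e ^ (j : ℤ)) q.2 = (e ^ ((j : ℤ) + n)) p.2
            rw [h2, ← Equiv.Perm.mul_apply, ← zpow_add]
        exact (congrArg (fun z => g (mtMk (e ^ k) z)) cp).symm

end Aux4

/-- **Lemma (rationality of the asymptotic cycle under iteration).**  Let `S` be a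
compact oriented surface, `φ ∈ Homeo(S)` a homeomorphism preserving a Borel
probability measure `μ`, and `k ≥ 1`.  If `C(φ, μ) ∈ H₁(M_φ; ℚ)`, then
`C(φ^k, μ) ∈ H₁(M_{φ^k}; ℚ)`. -/
theorem asymptotic_cycle_rational_of_iterate
    (S : Type*) [TopologicalSpace S] [CompactSpace S] [ConnectedSpace S] [T2Space S]
    [ChartedSpace (EuclideanHalfSpace 2) S] [MeasurableSpace S] [BorelSpace S]
    (μ : Measure S) [IsProbabilityMeasure μ]
    (φ : S ≃ₜ S) (hφ : MeasurePreserving ⇑φ μ μ)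
    (k : ℕ) (hk : 1 ≤ k)
    -- `C(φ, μ) ∈ H₁(M_φ; ℚ)` :
    (hrat : ∀ (f : C(MappingTorus φ.toEquiv, Circ)) (r : ℝ),
      AsympPair φ.toEquiv μ f r → ∃ q : ℚ, r = (q : ℝ)) :
    -- `C(φ^k, μ) ∈ H₁(M_{φ^k}; ℚ)` :
    ∀ (f : C(MappingTorus (φ.toEquiv ^ k), Circ)) (r : ℝ),
      AsympPair (φ.toEquiv ^ k) μ f r → ∃ q : ℚ, r = (q : ℝ) := by
  intro f r hpair
  obtain ⟨G, hGc, hG0, hGf, hGlim⟩ := hpair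
  have hk0 : (k : ℝ) ≠ 0 := Nat.cast_ne_zero.mpr (by omega)
  have hkpos : (0 : ℝ) < k := by
    have : (0:ℕ) < k := by omega
    exact_mod_cast this
  haveI hcompk : CompactSpace (MappingTorus (φ.toEquiv ^ k)) := mt_compactSpace _
  haveI hcomp1 : CompactSpace (MappingTorus φ.toEquiv) := mt_compactSpace _
  haveI : IsProbabilityMeasure (volume.restrict (Ico (0:ℝ) 1)) := ⟨by simp⟩
  -- the transfer of `f` to the mapping torus of `φ`
  have hFtc : Continuous fun p : ℝ × S =>
      ∑ j ∈ Finset.range k,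
        f (mtMk (φ.toEquiv ^ k) ((p.1 - (j:ℝ)) / k, (φ.toEquiv ^ (j : ℤ)) p.2)) := by
    refine continuous_finset_sum _ fun j _ => ?_
    exact f.continuous.comp (continuous_quot_mk.comp
      (((continuous_fst.sub continuous_const).div_const _).prodMk
        ((contZpow φ (j : ℤ)).comp continuous_snd)))
  set F : C(MappingTorus φ.toEquiv, Circ) :=
    ⟨Quot.lift (fun p : ℝ × S => ∑ j ∈ Finset.range k,
        f (mtMk (φ.toEquiv ^ k) ((p.1 - (j:ℝ)) / k, (φ.toEquiv ^ (j : ℤ)) p.2)))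
      (descent_sum φ.toEquiv k hk0 ⇑f),
     continuous_quot_lift (descent_sum φ.toEquiv k hk0 ⇑f) hFtc⟩ with hFdef
  -- the transferred cocycle
  set GF : ℝ × MappingTorus φ.toEquiv → ℝ := fun z =>
    Quot.lift
      (fun p : ℝ × S => ∑ j ∈ Finset.range k,
        G (z.1 / k, mtMk (φ.toEquiv ^ k) ((p.1 - (j:ℝ)) / k, (φ.toEquiv ^ (j : ℤ)) p.2)))
      (descent_sum φ.toEquiv k hk0 (fun m => G (z.1 / k, m))) z.2 with hGFdef
  have hGFc : Continuous GF := by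
    have ho : IsOpenMap (Prod.map (id : ℝ → ℝ) (mtMk φ.toEquiv)) :=
      IsOpenMap.id.prodMap (mtMk_isOpenMap φ)
    have hq : Topology.IsQuotientMap (Prod.map (id : ℝ → ℝ) (mtMk φ.toEquiv)) :=
      ho.isQuotientMap (continuous_id.prodMap continuous_quot_mk)
        (Function.Surjective.prodMap Function.surjective_id (Quot.mk_surjective))
    rw [hq.continuous_iff]
    show Continuous fun z : ℝ × (ℝ × S) => ∑ j ∈ Finset.range k,
      G (z.1 / k, mtMk (φ.toEquiv ^ k) ((z.2.1 - (j:ℝ)) / k, (φ.toEquiv ^ (j : ℤ)) z.2.2))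
    refine continuous_finset_sum _ fun j _ => ?_
    exact hGc.comp ((continuous_fst.div_const _).prodMk (continuous_quot_mk.comp
      (((continuous_snd.fst.sub continuous_const).div_const _).prodMk
        ((contZpow φ (j : ℤ)).comp continuous_snd.snd))))
  have hGF0 : ∀ m, GF (0, m) = 0 := by
    intro m
    induction m using Quot.ind with
    | _ p =>
      show (∑ j ∈ Finset.range k, G ((0:ℝ) / k,
        mtMk (φ.toEquiv ^ k) ((p.1 - (j:ℝ)) / k, (φ.toEquiv ^ (j : ℤ)) p.2))) = 0
      simp [hG0]
  have hGFf : ∀ s m, ((GF (s, m) : ℝ) : Circ) = F (suspFlow φ.toEquiv s m) - F m := by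
    intro s m
    induction m using Quot.ind with
    | _ p =>
      obtain ⟨u, x⟩ := p
      have hL : GF (s, Quot.mk (mtRel φ.toEquiv) (u, x)) =
          ∑ j ∈ Finset.range k, G (s / k,
            mtMk (φ.toEquiv ^ k) ((u - (j:ℝ)) / k, (φ.toEquiv ^ (j : ℤ)) x)) := rfl
      have hR1 : F (suspFlow φ.toEquiv s (Quot.mk (mtRel φ.toEquiv) (u, x))) =
          ∑ j ∈ Finset.range k,
            f (mtMk (φ.toEquiv ^ k) ((u + s - (j:ℝ)) / k, (φ.toEquiv ^ (j : ℤ)) x)) := rfl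
      have hR2 : F (Quot.mk (mtRel φ.toEquiv) (u, x)) =
          ∑ j ∈ Finset.range k,
            f (mtMk (φ.toEquiv ^ k) ((u - (j:ℝ)) / k, (φ.toEquiv ^ (j : ℤ)) x)) := rfl
      rw [hL, hR1, hR2, circ_coe_sum, ← Finset.sum_sub_distrib]
      refine Finset.sum_congr rfl fun j _ => ?_
      have hflow : suspFlow (φ.toEquiv ^ k) (s / k)
          (mtMk (φ.toEquiv ^ k) ((u - (j:ℝ)) / k, (φ.toEquiv ^ (j : ℤ)) x)) =
          mtMk (φ.toEquiv ^ k) ((u + s - (j:ℝ)) / k, (φ.toEquiv ^ (j : ℤ)) x) := by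
        show mtMk (φ.toEquiv ^ k) ((u - (j:ℝ)) / k + s / k, (φ.toEquiv ^ (j : ℤ)) x) = _
        have harg : (u - (j:ℝ)) / k + s / k = (u + s - (j:ℝ)) / k := by ring
        rw [harg]
      rw [hGf (s / k), hflow]
  -- measurability / measure-preservation toolbox
  have hcontmk1 : Continuous (mtMk φ.toEquiv) := continuous_quot_mk
  have hcontmkk : Continuous (mtMk (φ.toEquiv ^ k)) := continuous_quot_mk
  have hmeas1 : Measurable (mtMk φ.toEquiv) := hcontmk1.measurable
  have hmeask : Measurable (mtMk (φ.toEquiv ^ k)) := hcontmkk.measurable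
  have hemb : ∀ j : ℕ, MeasurableEmbedding ⇑(φ.toEquiv ^ j) := fun j => by
    rw [← homeoPow_coe]
    exact (homeoPow φ j).measurableEmbedding
  have hint_comp : ∀ (j : ℕ) (H : S → ℝ),
      ∫ x, H ((φ.toEquiv ^ j) x) ∂μ = ∫ x, H x ∂μ :=
    fun j H => (mpPow φ hφ j).integral_comp (hemb j) H
  -- the key integral identity
  have key : ∀ s : ℝ, ∫ m, GF (s, m) ∂(mtMeasure φ.toEquiv μ)
      = k * ∫ m, G (s / k, m) ∂(mtMeasure (φ.toEquiv ^ k) μ) := by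
    intro s
    set g : MappingTorus (φ.toEquiv ^ k) → ℝ := fun m => G (s / k, m) with hgdef
    have hgc : Continuous g := hGc.comp (Continuous.prodMk_right (s / k))
    obtain ⟨C, hC⟩ : ∃ C, ∀ m, ‖g m‖ ≤ C := by
      have hb := (isCompact_range hgc).isBounded
      rw [isBounded_iff_forall_norm_le] at hb
      obtain ⟨C, hC⟩ := hb
      exact ⟨C, fun m => hC _ (Set.mem_range_self m)⟩
    set W : ℝ × S → ℝ := fun p => g (mtMk (φ.toEquiv ^ k) p) with hWdef
    have hWc : Continuous W := hgc.comp continuous_quot_mk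
    set Φ : ℝ → ℝ := fun v => ∫ x, W (v, x) ∂μ with hPhidef
    have hΦc : Continuous Φ := by
      refine continuous_of_dominated (F := fun v x => W (v, x)) (bound := fun _ => C) ?_ ?_ ?_ ?_
      · exact fun v => (hWc.comp (Continuous.prodMk_right v)).aestronglyMeasurable
      · exact fun v => Filter.Eventually.of_forall fun x => hC _
      · exact integrable_const C
      · exact Filter.Eventually.of_forall fun x =>
          hWc.comp (continuous_id.prodMk continuous_const)
    have hΦint : ∀ a b : ℝ, IntervalIntegrable Φ volume a b :=
      fun a b => hΦc.intervalIntegrable a b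
    have hΦper : Function.Periodic Φ 1 := by
      intro v
      have h1 : ∀ x : S, W (v + 1, x) = W (v, (φ.toEquiv ^ k) x) := by
        intro x
        show g (mtMk (φ.toEquiv ^ k) (v + 1, x))
          = g (mtMk (φ.toEquiv ^ k) (v, (φ.toEquiv ^ k) x))
        rw [mtMk_one (φ.toEquiv ^ k) (v + 1) x,
          show v + 1 - 1 = v from by ring]
      calc Φ (v + 1) = ∫ x, W (v, (φ.toEquiv ^ k) x) ∂μ :=
            integral_congr_ae (Filter.Eventually.of_forall h1)
        _ = Φ v := hint_comp k (fun y => W (v, y))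
    have hintW : Integrable W ((volume.restrict (Ico (0:ℝ) 1)).prod μ) :=
      (integrable_const C).mono' hWc.aestronglyMeasurable
        (Filter.Eventually.of_forall fun p => hC _)
    have hintWj : ∀ j : ℕ, Integrable (fun p : ℝ × S =>
        W ((p.1 - (j:ℝ)) / k, (φ.toEquiv ^ (j : ℤ)) p.2))
        ((volume.restrict (Ico (0:ℝ) 1)).prod μ) := by
      intro j
      have hc : Continuous fun p : ℝ × S =>
          W ((p.1 - (j:ℝ)) / k, (φ.toEquiv ^ (j : ℤ)) p.2) :=
        hWc.comp (((continuous_fst.sub continuous_const).div_const _).prodMk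
          ((contZpow φ (j : ℤ)).comp continuous_snd))
      exact (integrable_const C).mono' hc.aestronglyMeasurable
        (Filter.Eventually.of_forall fun p => hC _)
    have hLHS1 : ∫ m, GF (s, m) ∂(mtMeasure φ.toEquiv μ)
        = ∫ p, (∑ j ∈ Finset.range k, W ((p.1 - (j:ℝ)) / k, (φ.toEquiv ^ (j : ℤ)) p.2))
            ∂((volume.restrict (Ico (0:ℝ) 1)).prod μ) := by
      exact integral_map hmeas1.aemeasurable
        ((hGFc.comp (Continuous.prodMk_right s)).aestronglyMeasurable)
    have hLHS2 : ∫ p, (∑ j ∈ Finset.range k,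
          W ((p.1 - (j:ℝ)) / k, (φ.toEquiv ^ (j : ℤ)) p.2))
          ∂((volume.restrict (Ico (0:ℝ) 1)).prod μ)
        = ∑ j ∈ Finset.range k, ∫ p, W ((p.1 - (j:ℝ)) / k, (φ.toEquiv ^ (j : ℤ)) p.2)
            ∂((volume.restrict (Ico (0:ℝ) 1)).prod μ) :=
      integral_finset_sum _ fun j _ => hintWj j
    have hterm : ∀ j ∈ Finset.range k,
        (∫ p, W ((p.1 - (j:ℝ)) / k, (φ.toEquiv ^ (j : ℤ)) p.2)
          ∂((volume.restrict (Ico (0:ℝ) 1)).prod μ))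
        = (k:ℝ) * ∫ v in ((0:ℝ) - (j:ℝ)) / k..((1:ℝ) - (j:ℝ)) / k, Φ v := by
      intro j _
      rw [integral_prod _ (hintWj j)]
      have hinner : ∀ t : ℝ, (∫ x, W ((t - (j:ℝ)) / k, (φ.toEquiv ^ (j : ℤ)) x) ∂μ)
          = Φ ((t - (j:ℝ)) / k) := by
        intro t
        have hz : ∀ x : S, (φ.toEquiv ^ (j : ℤ)) x = (φ.toEquiv ^ j) x := fun x => by
          rw [zpow_natCast]
        simp only [hz]
        exact hint_comp j (fun y => W ((t - (j:ℝ)) / k, y))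
      simp only [hinner]
      rw [show (∫ t, Φ ((t - (j:ℝ)) / k) ∂(volume.restrict (Ico (0:ℝ) 1)))
            = ∫ t in Ico (0:ℝ) 1, Φ ((t - (j:ℝ)) / k) from rfl,
          MeasureTheory.integral_Ico_eq_integral_Ioo,
          ← MeasureTheory.integral_Ioc_eq_integral_Ioo,
          ← intervalIntegral.integral_of_le zero_le_one,
          intervalIntegral.integral_comp_sub_right (fun t => Φ (t / k)) (j:ℝ),
          intervalIntegral.integral_comp_div (fun t => Φ t) hk0, smul_eq_mul]
    set a : ℕ → ℝ := fun i => (1 - (i:ℝ)) / k with hadef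
    have hchain := intervalIntegral.sum_integral_adjacent_intervals
      (f := Φ) (μ := volume) (a := a) (n := k) (fun i _ => hΦint _ _)
    have hsum : ∑ j ∈ Finset.range k,
        ((k:ℝ) * ∫ v in ((0:ℝ) - (j:ℝ)) / k..((1:ℝ) - (j:ℝ)) / k, Φ v)
        = k * ∫ v in (0:ℝ)..1, Φ v := by
      rw [← Finset.mul_sum]
      congr 1
      calc ∑ j ∈ Finset.range k, ∫ v in ((0:ℝ) - (j:ℝ)) / k..((1:ℝ) - (j:ℝ)) / k, Φ v
          = ∑ j ∈ Finset.range k, -∫ v in (a j)..(a (j + 1)), Φ v := by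
            refine Finset.sum_congr rfl fun j _ => ?_
            rw [← intervalIntegral.integral_symm]
            have e1 : a (j + 1) = ((0:ℝ) - (j:ℝ)) / k := by
              rw [hadef]; push_cast; ring
            have e2 : a j = ((1:ℝ) - (j:ℝ)) / k := by rw [hadef]
            rw [e1, e2]
        _ = -∫ v in (a 0)..(a k), Φ v := by rw [Finset.sum_neg_distrib, hchain]
        _ = ∫ v in (a k)..(a 0), Φ v := (intervalIntegral.integral_symm _ _).symm
        _ = ∫ v in (0:ℝ)..1, Φ v := by
            have hper := hΦper.intervalIntegral_add_eq (a k) 0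
            rw [show a k + 1 = a 0 from by rw [hadef]; push_cast; field_simp; ring,
              zero_add] at hper
            exact hper
    have hRHS : ∫ m, g m ∂(mtMeasure (φ.toEquiv ^ k) μ) = ∫ v in (0:ℝ)..1, Φ v := by
      calc ∫ m, g m ∂(mtMeasure (φ.toEquiv ^ k) μ)
          = ∫ p, W p ∂((volume.restrict (Ico (0:ℝ) 1)).prod μ) :=
            integral_map hmeask.aemeasurable hgc.aestronglyMeasurable
        _ = ∫ t, Φ t ∂(volume.restrict (Ico (0:ℝ) 1)) := by
            rw [integral_prod _ hintW]
        _ = ∫ v in (0:ℝ)..1, Φ v := by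
            rw [show (∫ t, Φ t ∂(volume.restrict (Ico (0:ℝ) 1)))
                  = ∫ t in Ico (0:ℝ) 1, Φ t from rfl,
              MeasureTheory.integral_Ico_eq_integral_Ioo,
              ← MeasureTheory.integral_Ioc_eq_integral_Ioo,
              ← intervalIntegral.integral_of_le zero_le_one]
    calc ∫ m, GF (s, m) ∂(mtMeasure φ.toEquiv μ)
        = ∑ j ∈ Finset.range k, ∫ p, W ((p.1 - (j:ℝ)) / k, (φ.toEquiv ^ (j : ℤ)) p.2)
            ∂((volume.restrict (Ico (0:ℝ) 1)).prod μ) := hLHS1.trans hLHS2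
      _ = ∑ j ∈ Finset.range k,
            ((k:ℝ) * ∫ v in ((0:ℝ) - (j:ℝ)) / k..((1:ℝ) - (j:ℝ)) / k, Φ v) :=
          Finset.sum_congr rfl hterm
      _ = k * ∫ v in (0:ℝ)..1, Φ v := hsum
      _ = k * ∫ m, g m ∂(mtMeasure (φ.toEquiv ^ k) μ) := by rw [hRHS]
  -- conclusion
  have hdiv : Tendsto (fun s : ℝ => s / k) atTop atTop :=
    tendsto_id.atTop_div_const hkpos
  have h2 : Tendsto (fun s : ℝ =>
      (∫ m, G (s / k, m) ∂(mtMeasure (φ.toEquiv ^ k) μ)) / (s / k)) atTop (nhds r) :=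
    hGlim.comp hdiv
  have heq : (fun s : ℝ =>
      (∫ m, G (s / k, m) ∂(mtMeasure (φ.toEquiv ^ k) μ)) / (s / k))
      =ᶠ[atTop] fun s : ℝ => (∫ m, GF (s, m) ∂(mtMeasure φ.toEquiv μ)) / s := by
    filter_upwards [eventually_ne_atTop 0] with s hs
    rw [key s, div_div_eq_mul_div, mul_comm]
  exact hrat F r ⟨GF, hGFc, hGF0, hGFf, Tendsto.congr' heq h2⟩

end
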